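/- arXiv:2306.12116 — 2 statements merged into one kernel-verified Lean document; each statement's English description precedes it below -/
import Mathlib

section
/- Let C < min over i of |a_{ii}| where a_{ii} < 0 for all i, let θ ∈ (1/2, 1], and choose Δ > 0 small enough that a := (2θ−1)Δ − Cθ²Δ² > 0 and ab² + C ≤ −a_{ii} for all i, where b := CθΔ/a. Suppose 2 x_i f_i(x,y) + ∑_{l=1}^m g_{il}(x,y)² ≤ ∑_{j=1}^d a_{ij} x_j² + ∑_{j=1}^d b_{ij} y_j² for all x, y ∈ ℝ^d and all i, with a_{ij} ≥ 0 for i ≠ j and b_{ij} ≥ 0. Then for all x, y ∈ ℝ^d and all i, 2 x_i f_i(x,y) + ∑_{l=1}^m g_{il}(x,y)² + (1−2θ) f_i(x,y)² Δ ≤ −C (x_i − θΔ f_i(x,y))² + ∑_{j≠i} a_{ij} x_j² + ∑_{j=1}^d b_{ij} y_j². -/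
/-! Splitting off the diagonal term, the claim reduces to the scalar inequality
`a_ii x² + (1 - 2θ) Δ f² ≤ -C (x - θΔf)²`. With `A = (2θ-1)Δ - Cθ²Δ²` and `AB = CθΔ`, the
difference of the two sides is `(AB² + C + a_ii) x² - A (Bx + f)²`, which is nonpositive. -/

theorem le_neg_mul_sq_sub_theta_step {A B C θ Δ α : ℝ}
    (hA : A = (2*θ - 1)*Δ - C*θ^2*Δ^2) (hAB : A * B = C*θ*Δ) (hA0 : 0 ≤ A)
    (hα : A*B^2 + C ≤ -α) (x f : ℝ) :
    α * x^2 + (1 - 2*θ) * f^2 * Δ ≤ -C * (x - θ*Δ*f)^2 := by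
  have hsq : 0 ≤ A * (B*x + f)^2 := by positivity
  have hx : (A*B^2 + C + α) * x^2 ≤ 0 :=
    mul_nonpos_of_nonpos_of_nonneg (by linarith) (sq_nonneg x)
  linear_combination hsq + hx + hA * f^2 + 2 * hAB * x * f

theorem stmt_8_general (d m : ℕ)
    (f : (Fin d → ℝ) → (Fin d → ℝ) → Fin d → ℝ)
    (g : (Fin d → ℝ) → (Fin d → ℝ) → Fin d → Fin m → ℝ)
    (a b : Fin d → Fin d → ℝ)
    (θ Δ C : ℝ)
    (A : ℝ) (hA : A = (2*θ - 1)*Δ - C*θ^2*Δ^2) (hApos : 0 < A)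
    (B : ℝ) (hB : B = C*θ*Δ/A)
    (hABC : ∀ i, A*B^2 + C ≤ -a i i)
    (hcond : ∀ (i : Fin d) (x y : Fin d → ℝ),
      2 * x i * f x y i + ∑ l, (g x y i l) ^ 2 ≤
        ∑ j, a i j * (x j) ^ 2 + ∑ j, b i j * (y j) ^ 2) :
    ∀ (i : Fin d) (x y : Fin d → ℝ),
      2 * x i * f x y i + ∑ l, (g x y i l) ^ 2 + (1 - 2*θ) * (f x y i) ^ 2 * Δ ≤
        -C * (x i - θ*Δ*(f x y i)) ^ 2 +
          ∑ j ∈ Finset.univ.erase i, a i j * (x j) ^ 2 +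
          ∑ j, b i j * (y j) ^ 2 := by
  intro i x y
  have hAB : A * B = C*θ*Δ := by rw [hB]; field_simp
  have hdiagonal := le_neg_mul_sq_sub_theta_step hA hAB hApos.le (hABC i) (x i) (f x y i)
  have h := hcond i x y
  rw [← Finset.add_sum_erase _ _ (Finset.mem_univ i)] at h
  linarith

theorem stmt_8 (d m : ℕ)
    (f : (Fin d → ℝ) → (Fin d → ℝ) → Fin d → ℝ)
    (g : (Fin d → ℝ) → (Fin d → ℝ) → Fin d → Fin m → ℝ)
    (a b : Fin d → Fin d → ℝ)
    (ha : ∀ i j, i ≠ j → 0 ≤ a i j) (hb : ∀ i j, 0 ≤ b i j)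
    (hdiag : ∀ i, a i i < 0)
    (θ Δ C : ℝ) (hθ : 1/2 < θ) (hθ1 : θ ≤ 1) (hΔ : 0 < Δ)
    (hCpos : 0 < C) (hC : ∀ i, C < |a i i|)
    (A : ℝ) (hA : A = (2*θ - 1)*Δ - C*θ^2*Δ^2) (hApos : 0 < A)
    (B : ℝ) (hB : B = C*θ*Δ/A)
    (hABC : ∀ i, A*B^2 + C ≤ -a i i)
    (hcond : ∀ (i : Fin d) (x y : Fin d → ℝ),
      2 * x i * f x y i + ∑ l, (g x y i l) ^ 2 ≤
        ∑ j, a i j * (x j) ^ 2 + ∑ j, b i j * (y j) ^ 2) :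
    ∀ (i : Fin d) (x y : Fin d → ℝ),
      2 * x i * f x y i + ∑ l, (g x y i l) ^ 2 + (1 - 2*θ) * (f x y i) ^ 2 * Δ ≤
        -C * (x i - θ*Δ*(f x y i)) ^ 2 +
          ∑ j ∈ Finset.univ.erase i, a i j * (x j) ^ 2 +
          ∑ j, b i j * (y j) ^ 2 :=
  stmt_8_general d m f g a b θ Δ C A hA hApos B hB hABC hcond
end

section
/- There do not exist constants C₁ > C₂ > 0 such that 2⟨x, f(x,y)⟩ + ‖g(x,y)‖² ≤ −C₁|x|² + C₂|y|² for all x, y ∈ ℝ², where f(x,y) = (−(2/5)x₁ + (4/5)x₂ + 10⁻⁴ y₁ + 10⁻⁴ y₂, (√38/625) x₁ − x₂ + 10⁻⁴ y₁ + 10⁻⁴ y₂) and g(x,y) is the diagonal matrix diag((√10/5) x₁, (√10/5) x₂). -/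
theorem stmt_11 :
    ¬ ∃ C₁ C₂ : ℝ, C₂ < C₁ ∧ 0 < C₂ ∧
      ∀ x y : Fin 2 → ℝ,
        2 * (x 0 * (-(2/5)*x 0 + (4/5)*x 1 + (1/10^4)*y 0 + (1/10^4)*y 1) +
             x 1 * ((Real.sqrt 38/625)*x 0 - x 1 + (1/10^4)*y 0 + (1/10^4)*y 1)) +
          ((Real.sqrt 10/5)*x 0)^2 + ((Real.sqrt 10/5)*x 1)^2 ≤
        -C₁ * ((x 0)^2 + (x 1)^2) + C₂ * ((y 0)^2 + (y 1)^2) := by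
  rintro ⟨C₁, C₂, h1, h2, h⟩
  have := h ![2, 1] ![0, 0]
  simp [Matrix.cons_val_zero, Matrix.cons_val_one] at this
  have h10 : Real.sqrt 10 ^ 2 = 10 := Real.sq_sqrt (by norm_num)
  have h38 : 0 < Real.sqrt 38 := Real.sqrt_pos.mpr (by norm_num)
  nlinarith [this, h10, h38, h1, h2]
end
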